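/- arXiv:2009.07902 — 8 statements merged into one kernel-verified Lean document; each statement's English description precedes it below -/
import Mathlib

section
/- Let K ⊆ [-1,1]^I be a compact space and D ⊆ K a subset. Suppose that for every ε > 0 there exists a countable decomposition I = ⋃_{n ∈ ω} Iₙ^ε such that for every x ∈ D and every n, the set {i ∈ Iₙ^ε : |x(i)| > ε} is finite. Then there exists a topological embedding Φ : K → [-1,1]^{I × ω} such that Φ(x) ∈ c₀(I × ω) for every x ∈ D. -/
/-!
Fix the thresholds `εₙ = 1/(n+1)` and, for each `n`, a decomposition `I = ⋃ₘ Iₙₘ` witnessing the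
hypothesis at `εₙ`. Each coordinate `(i, k)` with `k ↔ (n, m)` records, for `i ∈ Iₙₘ`, the value
`x i` soft-thresholded at level `εₙ` and damped by `1/(k+1)`. Soft thresholding at all levels `εₙ`
recovers `x i`, so the map is continuous and injective, hence an embedding of the compact `K`.
For `x ∈ D` each block `k` has finite support by the hypothesis, and the damping makes all
coordinates outside finitely many blocks small, so the image lies in `c₀`.
-/

/-- `c₀(J)`: functions all of whose values are small outside a finite set. -/
def c0Set (J : Type*) : Set (J → ℝ) :=
  {x | ∀ ε > 0, {j : J | ε < |x j|}.Finite}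

open Filter Topology

section C0

variable {J : Type*}

theorem mem_c0Set_of_tendsto {x : J → ℝ} (hx : Tendsto x cofinite (𝓝 0)) : x ∈ c0Set J := by
  intro ε hε
  refine (eventually_cofinite.1 (Metric.tendsto_nhds.1 hx ε hε)).subset fun j hj => ?_
  simpa [Real.dist_eq] using hj.le

theorem mem_c0Set_of_finite_support {x : J → ℝ} (hx : (Function.support x).Finite) :
    x ∈ c0Set J :=
  fun _ hε => hx.subset fun _ hj => abs_pos.1 (hε.trans hj)

theorem mem_c0Set_prod {κ : Type*} {y : J × κ → ℝ} {c : κ → ℝ} (hc : c ∈ c0Set κ)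
    (hyc : ∀ p, |y p| ≤ c p.2) (hrow : ∀ k, (fun j => y (j, k)) ∈ c0Set J) :
    y ∈ c0Set (J × κ) := by
  intro ε hε
  refine ((hc ε hε).biUnion fun k _ => (hrow k ε hε).image fun j => (j, k)).subset ?_
  rintro ⟨j, k⟩ hp
  have hck : ε < |c k| := (lt_of_lt_of_le hp (hyc (j, k))).trans_le (le_abs_self _)
  exact Set.mem_biUnion hck ⟨j, hp, rfl⟩

theorem one_div_succ_mem_c0Set : (fun k : ℕ => 1 / ((k : ℝ) + 1)) ∈ c0Set ℕ :=
  mem_c0Set_of_tendsto (Nat.cofinite_eq_atTop ▸ tendsto_one_div_add_atTop_nhds_zero_nat)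

end C0

section SoftThreshold

def softThreshold (ε t : ℝ) : ℝ := max (t - ε) 0 + min (t + ε) 0

theorem continuous_softThreshold (ε : ℝ) : Continuous (softThreshold ε) := by
  unfold softThreshold
  fun_prop

theorem softThreshold_eq_zero {ε t : ℝ} (h : |t| ≤ ε) : softThreshold ε t = 0 := by
  rw [abs_le] at h
  rw [softThreshold, max_eq_right (by linarith), min_eq_right (by linarith), add_zero]

theorem abs_softThreshold_le {ε : ℝ} (hε : 0 ≤ ε) (t : ℝ) : |softThreshold ε t| ≤ |t| := by
  unfold softThreshold
  rw [abs_le]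
  have := neg_abs_le t
  have := le_abs_self t
  rcases max_cases (t - ε) 0 with ⟨h1, h1'⟩ | ⟨h1, h1'⟩ <;>
  rcases min_cases (t + ε) 0 with ⟨h2, h2'⟩ | ⟨h2, h2'⟩ <;>
  rw [h1, h2] <;> constructor <;> linarith

theorem abs_sub_le_of_softThreshold_eq {ε s t : ℝ} (hε : 0 ≤ ε)
    (h : softThreshold ε s = softThreshold ε t) : |s - t| ≤ 2 * ε := by
  unfold softThreshold at h
  rw [abs_sub_le_iff]
  rcases max_cases (s - ε) 0 with ⟨h1, h1'⟩ | ⟨h1, h1'⟩ <;>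
  rcases max_cases (t - ε) 0 with ⟨h2, h2'⟩ | ⟨h2, h2'⟩ <;>
  rcases min_cases (s + ε) 0 with ⟨h3, h3'⟩ | ⟨h3, h3'⟩ <;>
  rcases min_cases (t + ε) 0 with ⟨h4, h4'⟩ | ⟨h4, h4'⟩ <;>
  rw [h1, h3, h2, h4] at h <;> constructor <;> linarith

theorem eq_of_forall_softThreshold_eq {s t : ℝ}
    (h : ∀ n : ℕ, softThreshold (1 / ((n : ℝ) + 1)) s = softThreshold (1 / ((n : ℝ) + 1)) t) :
    s = t := by
  refine eq_of_forall_dist_le fun δ hδ => ?_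
  obtain ⟨n, hn⟩ := exists_nat_one_div_lt (half_pos hδ)
  calc dist s t = |s - t| := Real.dist_eq s t
    _ ≤ 2 * (1 / ((n : ℝ) + 1)) := abs_sub_le_of_softThreshold_eq (by positivity) (h n)
    _ ≤ δ := by linarith

end SoftThreshold

section DecompositionEmbedding

variable {I : Type*} (In : ℕ → ℕ → Set I)

/-- `In n m` is the `m`-th piece of the decomposition used at threshold `1/(n+1)`; the coordinate
`(i, k)` belongs to the piece indexed by `(n, m) = Nat.unpair k`. -/
noncomputable def decompositionEmbedding (x : I → ℝ) (p : I × ℕ) : ℝ :=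
  1 / ((p.2 : ℝ) + 1) *
    (In p.2.unpair.1 p.2.unpair.2).indicator
      (fun i => softThreshold (1 / ((p.2.unpair.1 : ℝ) + 1)) (x i)) p.1

theorem continuous_decompositionEmbedding : Continuous (decompositionEmbedding In) := by
  classical
  refine continuous_pi fun p => continuous_const.mul ?_
  simp only [Set.indicator_apply]
  exact Continuous.if_const _ ((continuous_softThreshold _).comp (continuous_apply p.1))
    continuous_const

theorem decompositionEmbedding_pair_of_mem {x : I → ℝ} {i : I} {n m : ℕ} (h : i ∈ In n m) :
    decompositionEmbedding In x (i, Nat.pair n m) =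
      1 / ((Nat.pair n m : ℝ) + 1) * softThreshold (1 / ((n : ℝ) + 1)) (x i) := by
  simp [decompositionEmbedding, h]

theorem injective_decompositionEmbedding (hcov : ∀ n, ⋃ m, In n m = Set.univ) :
    Function.Injective (decompositionEmbedding In) := by
  intro x y hxy
  funext i
  refine eq_of_forall_softThreshold_eq fun n => ?_
  obtain ⟨m, hm⟩ := Set.mem_iUnion.1 ((hcov n).symm ▸ Set.mem_univ i)
  have hcoord := congrFun hxy (i, Nat.pair n m)
  rw [decompositionEmbedding_pair_of_mem In hm, decompositionEmbedding_pair_of_mem In hm] at hcoord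
  exact mul_left_cancel₀ (by positivity) hcoord

theorem abs_decompositionEmbedding_le (x : I → ℝ) (p : I × ℕ) :
    |decompositionEmbedding In x p| ≤ 1 / ((p.2 : ℝ) + 1) * |x p.1| := by
  rw [decompositionEmbedding, abs_mul, abs_of_pos (by positivity)]
  refine mul_le_mul_of_nonneg_left ?_ (by positivity)
  by_cases h : p.1 ∈ In p.2.unpair.1 p.2.unpair.2
  · rw [Set.indicator_of_mem h]
    exact abs_softThreshold_le (by positivity) _
  · simp [Set.indicator_of_notMem h]

theorem abs_decompositionEmbedding_le_abs (x : I → ℝ) (p : I × ℕ) :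
    |decompositionEmbedding In x p| ≤ |x p.1| :=
  (abs_decompositionEmbedding_le In x p).trans <|
    mul_le_of_le_one_left (abs_nonneg _) (div_le_one_of_le₀ (by simp) (by positivity))

theorem decompositionEmbedding_mem_c0Set {x : I → ℝ} (hx : ∀ i, |x i| ≤ 1)
    (hfin : ∀ n m, {i ∈ In n m | 1 / ((n : ℝ) + 1) < |x i|}.Finite) :
    decompositionEmbedding In x ∈ c0Set (I × ℕ) := by
  refine mem_c0Set_prod one_div_succ_mem_c0Set
    (fun p => (abs_decompositionEmbedding_le In x p).trans
      (mul_le_of_le_one_right (by positivity) (hx p.1))) fun k => ?_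
  refine mem_c0Set_of_finite_support ((hfin k.unpair.1 k.unpair.2).subset fun i hi => ?_)
  have hi' : i ∈ Function.support ((In k.unpair.1 k.unpair.2).indicator
      fun i => softThreshold (1 / ((k.unpair.1 : ℝ) + 1)) (x i)) :=
    Function.support_mul_subset_right _ _ hi
  rw [Set.support_indicator] at hi'
  exact ⟨hi'.1, not_le.1 fun hle => hi'.2 (softThreshold_eq_zero hle)⟩

end DecompositionEmbedding

theorem embedding_into_c0_of_decompositions
    {I : Type*} (K D : Set (I → ℝ))
    (hK : IsCompact K)
    (hKcube : ∀ x ∈ K, ∀ i, x i ∈ Set.Icc (-1 : ℝ) 1)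
    (hDK : D ⊆ K)
    (hdec : ∀ ε > (0 : ℝ), ∃ In : ℕ → Set I,
      (⋃ n, In n) = Set.univ ∧
      ∀ x ∈ D, ∀ n, {i ∈ In n | ε < |x i|}.Finite) :
    ∃ Φ : (I → ℝ) → (I × ℕ → ℝ),
      Topology.IsEmbedding (fun x : K => Φ x) ∧
      (∀ x ∈ K, ∀ p, Φ x p ∈ Set.Icc (-1 : ℝ) 1) ∧
      ∀ x ∈ D, Φ x ∈ c0Set (I × ℕ) := by
  choose In hcov hfin using fun n : ℕ => hdec (1 / ((n : ℝ) + 1)) (by positivity)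
  have : CompactSpace K := isCompact_iff_compactSpace.mp hK
  refine ⟨decompositionEmbedding In, ?_, fun x hx p => ?_, fun x hx => ?_⟩
  · exact (((continuous_decompositionEmbedding In).comp continuous_subtype_val).isClosedEmbedding
      ((injective_decompositionEmbedding In hcov).comp Subtype.val_injective)).isEmbedding
  · exact abs_le.1 ((abs_decompositionEmbedding_le_abs In x p).trans (abs_le.2 (hKcube x hx p.1)))
  · exact decompositionEmbedding_mem_c0Set In (fun i => abs_le.2 (hKcube x (hDK hx) i))
      fun n m => hfin n x hx m
end

section
/- Let K ⊆ ℝ^I be a compact space (with the product topology) such that D := Σ(I) ∩ K is dense in K. Define Γ := {A ∈ [I]^{≤ω} : for every x ∈ K, the function x restricted to A (extended by 0 outside A) belongs to K}, and for A ∈ Γ define r_A : K → K by r_A(x) := x·1_A (i.e. r_A(x)(i) = x(i) for i ∈ A and 0 otherwise). Then each r_A is a continuous retraction of K onto a metrizable compact subset, the family (r_A)_{A ∈ Γ} is commutative (r_A ∘ r_B = r_B ∘ r_A = r_{A∩B}), Γ is closed under countable increasing unions, and ⋃_{A ∈ Γ} r_A[K] = D. -/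
/-!
Closing-off argument. For countable `B ⊆ I` the space `ℝ^B` is second countable, so countably
many points of `D` have restrictions to `B` dense among the restrictions of `D`; adding their
countable supports to `B`, iterating, and taking the union gives a countable `A` containing the
starting set. For `y ∈ K`, on each finite set of coordinates `y·1_A` is approximated by points
of `D` supported in `A`, so `y·1_A ∈ closure D ⊆ K`. Restriction to `A` embeds `r_A[K]` into
the metrizable space `ℝ^A`.
-/

open Set Function Filter Topology TopologicalSpace

theorem exists_seq_of_forall_exists_step {α : Type*} (P : α → Prop) (r : α → α → Prop)
    (h : ∀ a, P a → ∃ b, P b ∧ r a b) {a : α} (ha : P a) :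
    ∃ f : ℕ → α, f 0 = a ∧ ∀ n, P (f n) ∧ r (f n) (f (n + 1)) := by
  choose g hg using h
  let step : {x // P x} → {x // P x} := fun x => ⟨g x.1 x.2, (hg x.1 x.2).1⟩
  refine ⟨fun n => (step^[n] ⟨a, ha⟩).1, rfl, fun n => ⟨(step^[n] ⟨a, ha⟩).2, ?_⟩⟩
  show r _ (step^[n + 1] ⟨a, ha⟩).1
  rw [iterate_succ_apply']
  exact (hg _ _).2

theorem exists_countable_subset_image_subset_closure {X Y : Type*} [TopologicalSpace Y]
    (f : X → Y) (s : Set X) [SeparableSpace (f '' s)] :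
    ∃ t ⊆ s, t.Countable ∧ f '' s ⊆ closure (f '' t) := by
  obtain ⟨c, hc, hcd⟩ := exists_countable_dense (f '' s)
  choose g hgs hg using fun z : f '' s => z.2
  refine ⟨g '' c, image_subset_iff.2 fun z _ => hgs z, hc.image g, ?_⟩
  rw [image_image, funext hg]
  exact Subtype.dense_iff.1 hcd

theorem metrizableSpace_pi_of_countable {ι X : Type*} [Countable ι] [TopologicalSpace X]
    [MetrizableSpace X] : MetrizableSpace (ι → X) := by
  let := pseudoMetrizableSpaceUniformity X
  have := pseudoMetrizableSpaceUniformity_countably_generated X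
  have : PseudoMetrizableSpace (ι → X) := inferInstance
  infer_instance

section Indicator

variable {I M : Type*} [TopologicalSpace M] [Zero M]

theorem Set.continuous_indicator (A : Set I) : Continuous (A.indicator : (I → M) → I → M) := by
  refine continuous_pi fun i => ?_
  by_cases hi : i ∈ A
  · simpa [indicator_of_mem hi] using continuous_apply i
  · simpa [indicator_of_notMem hi] using continuous_const

theorem isEmbedding_domRestrict_image_indicator (A : Set I) (S : Set (I → M)) :
    IsEmbedding fun x : A.indicator '' S => A.domRestrict x.1 := by
  classical
  let e := Homeomorph.piEquivPiSubtypeProd (· ∈ A) fun _ : I => M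
  have hval : ∀ x ∈ A.indicator '' S, e.symm (A.domRestrict x, 0) = x := by
    rintro _ ⟨x, -, rfl⟩
    ext i
    by_cases hi : i ∈ A <;> simp [e, hi]
  refine ⟨IsInducing.of_comp (by fun_prop)
    (e.symm.continuous.comp (Continuous.prodMk_left 0)) ?_, fun x y hxy => ?_⟩
  · convert IsInducing.subtypeVal using 1
    ext x : 1
    exact hval x.1 x.2
  · rw [Subtype.ext_iff, ← hval x.1 x.2, ← hval y.1 y.2]
    exact congrArg (fun w => e.symm (w, 0)) hxy

theorem metrizableSpace_image_indicator [MetrizableSpace M] {A : Set I} (hA : A.Countable)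
    (S : Set (I → M)) : MetrizableSpace (A.indicator '' S) :=
  have := hA.to_subtype
  have := metrizableSpace_pi_of_countable (ι := A) (X := M)
  (isEmbedding_domRestrict_image_indicator A S).metrizableSpace

theorem secondCountableTopology_image_indicator [SecondCountableTopology M] {A : Set I}
    (hA : A.Countable) (S : Set (I → M)) : SecondCountableTopology (A.indicator '' S) :=
  have := hA.to_subtype
  (isEmbedding_domRestrict_image_indicator A S).secondCountableTopology

theorem mem_closure_of_forall_finite_indicator {S : Set (I → M)} {x : I → M}
    (h : ∀ F : Set I, F.Finite → F.indicator x ∈ closure (F.indicator '' S)) :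
    x ∈ closure S := by
  refine mem_closure_iff_nhds.2 fun U hU => ?_
  rw [nhds_pi, Filter.mem_pi] at hU
  obtain ⟨F, hF, t, ht, hFt⟩ := hU
  have hnhds : F.pi t ∈ 𝓝 (F.indicator x) :=
    set_pi_mem_nhds hF fun i hi => by simpa [indicator_of_mem hi] using ht i
  obtain ⟨_, hst, s, hs, rfl⟩ := mem_closure_iff_nhds.1 (h F hF) _ hnhds
  exact ⟨s, hFt fun i hi => by simpa [indicator_of_mem hi] using hst i hi, hs⟩

theorem indicator_mem_closure_image_indicator_of_subset {S : Set (I → M)} {x : I → M}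
    {G B : Set I} (hGB : G ⊆ B) (h : B.indicator x ∈ closure (B.indicator '' S)) :
    G.indicator x ∈ closure (G.indicator '' S) := by
  have := image_closure_subset_closure_image (G.continuous_indicator (M := M)) ⟨_, h, rfl⟩
  simpa only [image_image, indicator_indicator, inter_eq_left.2 hGB] using this

theorem IsClosed.indicator_iUnion_mem {K : Set (I → M)} (hK : IsClosed K) {f : ℕ → Set I}
    (hf : Monotone f) {x : I → M} (hx : ∀ n, (f n).indicator x ∈ K) :
    (⋃ n, f n).indicator x ∈ K :=
  hK.mem_of_tendsto (tendsto_pi_nhds.2 fun i => (hf.tendsto_indicator f x i).mono_right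
    (pure_le_nhds _)) (Eventually.of_forall hx)

variable [SecondCountableTopology M]

theorem exists_countable_superset_indicator_mem_closure {D : Set (I → M)}
    (hD : ∀ d ∈ D, (support d).Countable) {B : Set I} (hB : B.Countable) :
    ∃ B', B'.Countable ∧ B ⊆ B' ∧ ∀ y ∈ closure D,
      B.indicator y ∈ closure (B.indicator '' {d ∈ D | support d ⊆ B'}) := by
  have := secondCountableTopology_image_indicator hB D
  obtain ⟨C, hCD, hCc, hC⟩ := exists_countable_subset_image_subset_closure B.indicator D
  refine ⟨B ∪ ⋃ d ∈ C, support d, hB.union (hCc.biUnion fun d hd => hD d (hCD hd)),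
    subset_union_left, fun y hy => ?_⟩
  have hCsub : C ⊆ {d ∈ D | support d ⊆ B ∪ ⋃ d ∈ C, support d} := fun d hd =>
    ⟨hCD hd, subset_union_of_subset_right (subset_biUnion_of_mem hd) _⟩
  have hyD : B.indicator y ∈ closure (B.indicator '' D) :=
    image_closure_subset_closure_image B.continuous_indicator ⟨y, hy, rfl⟩
  exact closure_mono (image_mono hCsub) (closure_minimal hC isClosed_closure hyD)

theorem exists_countable_superset_indicator_mem {K : Set (I → M)} (hK : IsClosed K)
    (hdense : K ⊆ closure {x ∈ K | (support x).Countable}) {S : Set I} (hS : S.Countable) :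
    ∃ A, S ⊆ A ∧ A.Countable ∧ ∀ y ∈ K, A.indicator y ∈ K := by
  set D := {x ∈ K | (support x).Countable}
  obtain ⟨f, rfl, hf⟩ := exists_seq_of_forall_exists_step _ _
    (fun B hB => exists_countable_superset_indicator_mem_closure (D := D) (fun d hd => hd.2) hB) hS
  have hmono : Monotone f := monotone_nat_of_le_succ fun n => (hf n).2.1
  set A := ⋃ n, f n
  refine ⟨A, subset_iUnion f 0, countable_iUnion fun n => (hf n).1, fun y hy => ?_⟩
  set DA := {d ∈ D | support d ⊆ A}
  suffices A.indicator y ∈ closure DA from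
    hK.closure_subset_iff.2 (fun d hd => hd.1.1) this
  refine mem_closure_of_forall_finite_indicator fun F hF => ?_
  have hDA : ∀ d ∈ DA, F.indicator d = (F ∩ A).indicator d := fun d hd => by
    rw [← indicator_indicator, indicator_eq_self.2 hd.2]
  rw [indicator_indicator, image_congr hDA]
  obtain ⟨n, hn⟩ := hmono.directed_le.exists_mem_subset_of_finset_subset_biUnion
    (s := (hF.inter_of_left A).toFinset) (by rw [Finite.coe_toFinset]; exact inter_subset_right)
  have hDn : {d ∈ D | support d ⊆ f (n + 1)} ⊆ DA := fun d hd =>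
    ⟨hd.1, hd.2.trans (subset_iUnion f (n + 1))⟩
  exact indicator_mem_closure_image_indicator_of_subset (by simpa using hn)
    (closure_mono (image_mono hDn) ((hf n).2.2 y (hdense hy)))

end Indicator

theorem canonical_commutative_skeleton
    {I : Type*} (K : Set (I → ℝ))
    (hK : IsCompact K)
    (hdense : K ⊆ closure {x ∈ K | (Function.support x).Countable}) :
    let D : Set (I → ℝ) := {x ∈ K | (Function.support x).Countable}
    let Γ : Set (Set I) := {A | A.Countable ∧ ∀ x ∈ K, A.indicator x ∈ K}
    -- each r_A is a continuous retraction of K onto a metrizable compact subset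
    (∀ A ∈ Γ, Continuous (fun x : I → ℝ => A.indicator x) ∧
      (∀ x ∈ K, A.indicator x ∈ K) ∧
      (∀ x : I → ℝ, A.indicator (A.indicator x) = A.indicator x) ∧
      IsCompact ((fun x : I → ℝ => A.indicator x) '' K) ∧
      TopologicalSpace.MetrizableSpace ((fun x : I → ℝ => A.indicator x) '' K)) ∧
    -- commutativity: r_A ∘ r_B = r_B ∘ r_A = r_{A ∩ B}
    (∀ A ∈ Γ, ∀ B ∈ Γ, ∀ x : I → ℝ,
      A.indicator (B.indicator x) = (A ∩ B).indicator x ∧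
      B.indicator (A.indicator x) = (A ∩ B).indicator x) ∧
    -- Γ is closed under countable increasing unions
    (∀ f : ℕ → Set I, (∀ n, f n ∈ Γ) → Monotone f → (⋃ n, f n) ∈ Γ) ∧
    -- the union of the images of the retractions is exactly D
    (⋃ A ∈ Γ, (fun x : I → ℝ => A.indicator x) '' K) = D := by
  intro D Γ
  refine ⟨fun A hA => ⟨A.continuous_indicator, hA.2, fun x => by rw [indicator_indicator,
      inter_self], hK.image A.continuous_indicator, metrizableSpace_image_indicator hA.1 K⟩,
    fun A _ B _ x => ⟨indicator_indicator .., by rw [indicator_indicator, inter_comm]⟩,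
    fun f hf hmono => ⟨countable_iUnion fun n => (hf n).1,
      fun x hx => hK.isClosed.indicator_iUnion_mem hmono fun n => (hf n).2 x hx⟩, ?_⟩
  ext z
  simp only [mem_iUnion, mem_image, exists_prop]
  constructor
  · rintro ⟨A, hA, x, hx, rfl⟩
    exact ⟨hA.2 x hx, hA.1.mono support_indicator_subset⟩
  · rintro ⟨hzK, hz⟩
    obtain ⟨A, hzA, hA, hAK⟩ := exists_countable_superset_indicator_mem hK.isClosed hdense hz
    exact ⟨A, ⟨hA, hAK⟩, z, hzK, indicator_eq_self.2 hzA⟩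
end

section
/- Let K ⊆ ℝ^I be a compact space with D := Σ(I) ∩ K dense in K, and let Γ and (r_A)_{A∈Γ} be as in the canonical commutative skeleton (r_A(x) = x·1_A for A ∈ Γ). Then Γ is cofinal in [I]^{≤ω}: for every countable set E ⊆ I there exists A ∈ Γ with E ⊆ A. -/
open Set Function

/-- Compactness step: for each finite set `F` and `ε > 0` there is a countable set `C`
such that every `x ∈ K` is `ε`-approximated on `F` by an element of `K` whose support
lies in `C`. -/
lemma canonical_skeleton_step {I : Type*} (K : Set (I → ℝ))
    (hK : IsCompact K)
    (hdense : K ⊆ closure {x ∈ K | (Function.support x).Countable})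
    (F : Finset I) (ε : ℝ) (hε : 0 < ε) :
    ∃ C : Set I, C.Countable ∧ ∀ x ∈ K, ∃ y ∈ K,
      Function.support y ⊆ C ∧ ∀ i ∈ F, |x i - y i| < ε := by
  set D : Set (I → ℝ) := {x ∈ K | (Function.support x).Countable} with hD
  set U : (I → ℝ) → Set (I → ℝ) := fun y => {x | ∀ i ∈ F, |x i - y i| < ε} with hU
  have hUopen : ∀ y, IsOpen (U y) := by
    intro y
    have : U y = ⋂ i ∈ F, (fun x : I → ℝ => x i) ⁻¹' Metric.ball (y i) ε := by
      ext x
      simp [hU, Metric.mem_ball, Real.dist_eq]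
    rw [this]
    exact isOpen_biInter_finset fun i _ =>
      (Metric.isOpen_ball).preimage (continuous_apply i)
  have hcover : K ⊆ ⋃ y ∈ D, U y := by
    intro x hx
    have hxcl : x ∈ closure D := hdense hx
    have hxU : x ∈ U x := by intro i _; simpa using hε
    obtain ⟨y, hyU, hyD⟩ := mem_closure_iff.1 hxcl (U x) (hUopen x) hxU
    refine mem_biUnion hyD ?_
    intro i hi
    have := hyU i hi
    rw [abs_sub_comm] at this
    exact this
  obtain ⟨T, hTD, hTfin, hTcover⟩ := hK.elim_finite_subcover_image
    (fun y _ => hUopen y) hcover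
  refine ⟨⋃ y ∈ T, Function.support y, ?_, ?_⟩
  · exact hTfin.countable.biUnion fun y hy => (hTD hy).2
  · intro x hx
    obtain ⟨y, hyT, hxy⟩ := mem_iUnion₂.1 (hTcover hx)
    exact ⟨y, (hTD hyT).1, fun i hi => mem_biUnion hyT hi, fun i hi => hxy i hi⟩

theorem canonical_skeleton_index_cofinal
    {I : Type*} (K : Set (I → ℝ))
    (hK : IsCompact K)
    (hdense : K ⊆ closure {x ∈ K | (Function.support x).Countable}) :
    ∀ E : Set I, E.Countable →
      ∃ A : Set I, A.Countable ∧ (∀ x ∈ K, A.indicator x ∈ K) ∧ E ⊆ A := by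
  intro E hE
  -- choose the countable sets from the compactness step
  have hstep : ∀ (F : Finset I) (n : ℕ), ∃ C : Set I, C.Countable ∧ ∀ x ∈ K, ∃ y ∈ K,
      Function.support y ⊆ C ∧ ∀ i ∈ F, |x i - y i| < ((n : ℝ) + 1)⁻¹ := by
    intro F n
    exact canonical_skeleton_step K hK hdense F _ (by positivity)
  choose C hCcount hC using hstep
  -- the enlargement operator
  set g : Set I → Set I := fun B => B ∪ ⋃ F ∈ {F : Finset I | ↑F ⊆ B}, ⋃ n : ℕ, C F n
    with hg
  have hgsub : ∀ B : Set I, B ⊆ g B := fun B => subset_union_left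
  have hgcount : ∀ B : Set I, B.Countable → (g B).Countable := by
    intro B hB
    refine hB.union ?_
    have hFc : {F : Finset I | ↑F ⊆ B}.Countable := by
      have h1 : { t : Set I | Set.Finite t ∧ t ⊆ B }.Countable :=
        countable_setOf_finite_subset hB
      have h2 := h1.preimage (f := fun F : Finset I => (F : Set I)) Finset.coe_injective
      refine h2.mono ?_
      intro F hF
      exact ⟨F.finite_toSet, hF⟩
    exact hFc.biUnion fun F _ => countable_iUnion fun n => hCcount F n
  -- the increasing sequence of countable sets
  set As : ℕ → Set I := fun n => g^[n] E with hAs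
  have hAscount : ∀ n, (As n).Countable := by
    intro n
    induction n with
    | zero => simpa [hAs] using hE
    | succ n ih =>
      have : As (n + 1) = g (As n) := Function.iterate_succ_apply' g n E
      rw [this]; exact hgcount _ ih
  have hAsmono : Monotone As := by
    refine monotone_nat_of_le_succ ?_
    intro n
    have : As (n + 1) = g (As n) := Function.iterate_succ_apply' g n E
    rw [this]; exact hgsub _
  set A : Set I := ⋃ n, As n with hA
  have hAcount : A.Countable := countable_iUnion hAscount
  have hEA : E ⊆ A := subset_iUnion As 0
  refine ⟨A, hAcount, ?_, hEA⟩
  intro x hx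
  classical
  -- show `A.indicator x ∈ closure K = K`
  have hKclosed : IsClosed K := hK.isClosed
  rw [← hKclosed.closure_eq]
  rw [mem_closure_iff]
  intro o ho hzo
  set z : I → ℝ := A.indicator x with hz
  obtain ⟨F, u, hu, hpi⟩ := isOpen_pi_iff.1 ho z hzo
  -- get a uniform radius
  have hd : ∀ i : I, ∃ d : ℝ, 0 < d ∧ (i ∈ F → Metric.ball (z i) d ⊆ u i) := by
    intro i
    by_cases hi : i ∈ F
    · obtain ⟨d, hd0, hball⟩ := Metric.isOpen_iff.1 (hu i hi).1 (z i) (hu i hi).2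
      exact ⟨d, hd0, fun _ => hball⟩
    · exact ⟨1, one_pos, fun h => absurd h hi⟩
  choose d hd0 hball using hd
  set ε : ℝ := if h : F.Nonempty then F.inf' h d else 1 with hε
  have hε0 : 0 < ε := by
    rw [hε]
    split
    · next h => exact (Finset.lt_inf'_iff h).2 fun i _ => hd0 i
    · exact one_pos
  have hεle : ∀ i ∈ F, ε ≤ d i := by
    intro i hi
    rw [hε]
    rw [dif_pos ⟨i, hi⟩]
    exact Finset.inf'_le d hi
  -- the finite part of F inside A lies in some stage
  set F' : Finset I := F.filter (fun i => i ∈ A) with hF'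
  have hF'A : ∀ i ∈ F', i ∈ A := fun i hi => (Finset.mem_filter.1 hi).2
  have hF'stage : ∃ N, (F' : Set I) ⊆ As N := by
    have : ∀ i ∈ F', ∃ n, i ∈ As n := by
      intro i hi
      exact mem_iUnion.1 (hF'A i hi)
    choose! ni hni using this
    refine ⟨F'.sup ni, ?_⟩
    intro i hi
    have hi' : i ∈ F' := hi
    exact hAsmono (Finset.le_sup hi') (hni i hi')
  obtain ⟨N, hN⟩ := hF'stage
  -- pick n with 1/(n+1) < ε
  obtain ⟨n, hn⟩ := exists_nat_one_div_lt hε0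
  rw [one_div] at hn
  -- the approximation
  obtain ⟨y, hyK, hysupp, hyapprox⟩ := hC F' n x hx
  have hCsub : C F' n ⊆ A := by
    have h1 : C F' n ⊆ g (As N) := by
      intro j hj
      refine Or.inr ?_
      refine mem_biUnion (show (F' : Set I) ⊆ As N from hN) ?_
      exact mem_iUnion.2 ⟨n, hj⟩
    have h2 : g (As N) = As (N + 1) := (Function.iterate_succ_apply' g N E).symm
    rw [h2] at h1
    exact h1.trans (subset_iUnion As (N + 1))
  refine ⟨y, hpi ?_, hyK⟩
  intro i hi
  by_cases hiA : i ∈ A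
  · have hiF' : i ∈ F' := Finset.mem_filter.2 ⟨hi, hiA⟩
    have h1 : |x i - y i| < ((n : ℝ) + 1)⁻¹ := hyapprox i hiF'
    have hzi : z i = x i := indicator_of_mem hiA x
    have : dist (y i) (z i) < d i := by
      rw [hzi, Real.dist_eq, abs_sub_comm]
      exact h1.trans (hn.trans_le (hεle i hi))
    exact hball i hi (Metric.mem_ball.2 this)
  · have hyi : y i = 0 := by
      by_contra h
      exact hiA (hCsub (hysupp h))
    have hzi : z i = 0 := indicator_of_notMem hiA x
    have : dist (y i) (z i) < d i := by
      rw [hyi, hzi]; simpa using hd0 i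
    exact hball i hi (Metric.mem_ball.2 this)
end

section
/- Let K be a compact Hausdorff space and A ⊆ C(K) a nonempty bounded set. Let ε > 0 and suppose (r_s)_{s∈Γ} is a family of continuous retractions on K indexed by a σ-complete up-directed poset Γ such that for every x in a fixed set D ⊆ K and every increasing sequence (s_n) in Γ with s = sup_n s_n, limsup_n ρ_A(r_{s_n}(x), r_s(x)) ≤ ε, and such that for every up-directed Γ' ⊆ Γ the pointwise limit R_{Γ'}(x) = lim_{s∈Γ'} r_s(x) exists. Then for every x ∈ D and every up-directed Γ' ⊆ Γ there exists s₀ ∈ Γ' such that ρ_A(R_{Γ'}(x), r_s(x)) ≤ 7ε for all s ∈ Γ' with s ≥ s₀. -/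
open Filter

theorem shrinking_estimate_for_updirected_limits
    {K : Type*} [TopologicalSpace K] [CompactSpace K] [T2Space K]
    {Γ : Type*} [PartialOrder Γ]
    (hdir : ∀ s t : Γ, ∃ u, s ≤ u ∧ t ≤ u)
    (hσ : ∀ f : ℕ → Γ, Monotone f → ∃ s, IsLUB (Set.range f) s)
    (A : Set C(K, ℝ)) (hAne : A.Nonempty) (hAbdd : ∃ M : ℝ, ∀ f ∈ A, ‖f‖ ≤ M)
    (ρ : K → K → ℝ)
    (hρ : ∀ x y : K, ρ x y = sSup ((fun f : C(K, ℝ) => |f x - f y|) '' A))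
    (ε : ℝ) (hε : 0 < ε)
    (r : Γ → K → K)
    (hcont : ∀ s, Continuous (r s))
    (hretr : ∀ s, ∀ x, r s (r s x) = r s x)
    (hcomm : ∀ s t : Γ, s ≤ t → ∀ x, r s (r t x) = r s x ∧ r t (r s x) = r s x)
    (D : Set K)
    (hshrink : ∀ x ∈ D, ∀ f : ℕ → Γ, Monotone f → ∀ s, IsLUB (Set.range f) s →
      Filter.limsup (fun n => ρ (r (f n) x) (r s x)) atTop ≤ ε)
    (R : Set Γ → K → K)
    (hR : ∀ Γ' : Set Γ, DirectedOn (· ≤ ·) Γ' → Γ'.Nonempty → ∀ x : K,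
      Tendsto (fun s : Γ' => r s x) atTop (nhds (R Γ' x))) :
    ∀ x ∈ D, ∀ Γ' : Set Γ, DirectedOn (· ≤ ·) Γ' → Γ'.Nonempty →
      ∃ s₀ ∈ Γ', ∀ s ∈ Γ', s₀ ≤ s → ρ (R Γ' x) (r s x) ≤ 7 * ε := by
  obtain ⟨M, hM⟩ := hAbdd
  have hbdd : ∀ x y : K, BddAbove ((fun f : C(K, ℝ) => |f x - f y|) '' A) := by
    intro x y
    refine ⟨2 * M, ?_⟩
    rintro v ⟨f, hf, rfl⟩
    have h1 : |f x| ≤ M := le_trans (f.norm_coe_le_norm x) (hM f hf)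
    have h2 : |f y| ≤ M := le_trans (f.norm_coe_le_norm y) (hM f hf)
    calc |f x - f y| ≤ |f x| + |f y| := abs_sub _ _
      _ ≤ 2 * M := by linarith
  have hmem_le : ∀ (f : C(K, ℝ)), f ∈ A → ∀ x y, |f x - f y| ≤ ρ x y := by
    intro f hf x y
    rw [hρ]
    exact le_csSup (hbdd x y) ⟨f, hf, rfl⟩
  have hρ_le : ∀ x y c, (∀ f ∈ A, |f x - f y| ≤ c) → ρ x y ≤ c := by
    intro x y c h
    rw [hρ]
    exact csSup_le (hAne.image _) (by rintro v ⟨f, hf, rfl⟩; exact h f hf)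
  have hρ_nonneg : ∀ x y, 0 ≤ ρ x y := by
    intro x y
    obtain ⟨f, hf⟩ := hAne
    exact le_trans (abs_nonneg _) (hmem_le f hf x y)
  have hρ_bdd : ∀ x y, ρ x y ≤ 2 * M := by
    intro x y
    apply hρ_le
    intro f hf
    have h1 : |f x| ≤ M := le_trans (f.norm_coe_le_norm x) (hM f hf)
    have h2 : |f y| ≤ M := le_trans (f.norm_coe_le_norm y) (hM f hf)
    calc |f x - f y| ≤ |f x| + |f y| := abs_sub _ _
      _ ≤ 2 * M := by linarith
  have hρ_symm : ∀ x y, ρ x y = ρ y x := by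
    intro x y
    apply le_antisymm <;>
      · apply hρ_le
        intro f hf
        rw [abs_sub_comm]
        exact hmem_le f hf _ _
  have htri : ∀ x y z, ρ x z ≤ ρ x y + ρ y z := by
    intro x y z
    apply hρ_le
    intro f hf
    calc |f x - f z| ≤ |f x - f y| + |f y - f z| := abs_sub_le _ _ _
      _ ≤ ρ x y + ρ y z := add_le_add (hmem_le f hf x y) (hmem_le f hf y z)
  intro x hx Γ' hdir' hne'
  -- Step 1 : find s₀ with ρ (r s₀ x) (r s x) < 3ε for all s ≥ s₀ in Γ'
  have step1 : ∃ s₀ ∈ Γ', ∀ s ∈ Γ', s₀ ≤ s → ρ (r s₀ x) (r s x) < 3 * ε := by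
    by_contra hc
    push_neg at hc
    obtain ⟨t₀, ht₀⟩ := hne'
    have hg : ∀ t : Γ', ∃ t' : Γ', (t : Γ) ≤ (t' : Γ) ∧ 3 * ε ≤ ρ (r t x) (r t' x) := by
      rintro ⟨t, ht⟩
      obtain ⟨s, hs, hle, hge⟩ := hc t ht
      exact ⟨⟨s, hs⟩, hle, hge⟩
    choose g hg1 hg2 using hg
    set f : ℕ → Γ' := fun n => g^[n] ⟨t₀, ht₀⟩ with hf
    have hsucc : ∀ n, f (n + 1) = g (f n) := by
      intro n; rw [hf]; simp [Function.iterate_succ_apply']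
    have hstep : ∀ n, ((f n : Γ)) ≤ (f (n + 1) : Γ) := by
      intro n; rw [hsucc]; exact hg1 _
    have hmono : Monotone (fun n => (f n : Γ)) := monotone_nat_of_le_succ hstep
    obtain ⟨s, hsl⟩ := hσ _ hmono
    have hls := hshrink x hx _ hmono s hsl
    set u : ℕ → ℝ := fun n => ρ (r (f n) x) (r s x) with hu
    have hub : IsBoundedUnder (· ≤ ·) atTop u :=
      isBoundedUnder_of ⟨2 * M, fun n => hρ_bdd _ _⟩
    have hev : ∀ᶠ n in atTop, u n < 3 * ε / 2 := by
      apply eventually_lt_of_limsup_lt _ hub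
      calc limsup u atTop ≤ ε := hls
        _ < 3 * ε / 2 := by linarith
    obtain ⟨N, hN⟩ := eventually_atTop.mp hev
    have h1 : u N < 3 * ε / 2 := hN N le_rfl
    have h2 : u (N + 1) < 3 * ε / 2 := hN (N + 1) (Nat.le_succ N)
    have hlow : 3 * ε ≤ ρ (r (f N) x) (r (f (N + 1)) x) := by
      rw [hsucc]; exact hg2 (f N)
    have htr : ρ (r (f N) x) (r (f (N + 1)) x) ≤ u N + u (N + 1) := by
      have := htri (r (f N) x) (r s x) (r (f (N + 1)) x)
      rw [hρ_symm (r s x) (r (f (N+1)) x)] at this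
      exact this
    linarith
  obtain ⟨s₀, hs₀, hstep1⟩ := step1
  refine ⟨s₀, hs₀, ?_⟩
  intro s hs hle
  haveI : Nonempty Γ' := ⟨⟨s₀, hs₀⟩⟩
  haveI : IsDirected Γ' (· ≤ ·) := ⟨by
    rintro ⟨a, ha⟩ ⟨b, hb⟩
    obtain ⟨c, hc, hac, hbc⟩ := hdir' a ha b hb
    exact ⟨⟨c, hc⟩, hac, hbc⟩⟩
  haveI : (atTop : Filter Γ').NeBot := atTop_neBot_iff.mpr ⟨‹_›, ‹_›⟩
  have key : ∀ f ∈ A, |f (R Γ' x) - f (r s x)| ≤ 6 * ε := by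
    intro f hf
    have hT : Tendsto (fun t : Γ' => r t x) atTop (nhds (R Γ' x)) := hR Γ' hdir' hne' x
    have hT2 : Tendsto (fun t : Γ' => |f (r t x) - f (r s x)|) atTop
        (nhds (|f (R Γ' x) - f (r s x)|)) := by
      have h := (f.continuous.tendsto _).comp hT
      exact (h.sub tendsto_const_nhds).abs
    apply le_of_tendsto hT2
    obtain ⟨s₁, hs₁, hle1, hle2⟩ := hdir' s₀ hs₀ s hs
    filter_upwards [eventually_ge_atTop (⟨s₁, hs₁⟩ : Γ')] with t ht
    have ht' : s₁ ≤ (t : Γ) := ht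
    have hts₀ : s₀ ≤ (t : Γ) := le_trans hle1 ht'
    have h1 : ρ (r s₀ x) (r t x) < 3 * ε := hstep1 t t.2 hts₀
    have h2 : ρ (r s₀ x) (r s x) < 3 * ε := hstep1 s hs hle
    have h3 : ρ (r t x) (r s x) ≤ ρ (r t x) (r s₀ x) + ρ (r s₀ x) (r s x) := htri _ _ _
    rw [hρ_symm (r (t : Γ) x) (r s₀ x)] at h3
    have h4 : ρ (r t x) (r s x) ≤ 6 * ε := by linarith
    exact le_trans (hmem_le f hf _ _) h4
  have h6 : ρ (R Γ' x) (r s x) ≤ 6 * ε := hρ_le _ _ _ key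
  linarith
end

section
/- Let Γ be an up-directed σ-complete poset and let A ⊆ Γ be up-directed. Then the σ-closure A_σ of A (the smallest subset of Γ containing A and closed under suprema of increasing sequences) is up-directed. -/
universe u

/-- Transfinite levels of the σ-closure of `A`. -/
def lvl {Γ : Type u} [PartialOrder Γ] (A : Set Γ) (α : Ordinal.{u}) : Set Γ :=
  A ∪ {s | ∃ f : ℕ → Γ, Monotone f ∧ IsLUB (Set.range f) s ∧
        ∀ n, ∃ β : Ordinal.{u}, ∃ _ : β < α, f n ∈ lvl A β}
termination_by α
decreasing_by assumption

lemma subset_lvl {Γ : Type u} [PartialOrder Γ] (A : Set Γ) (α : Ordinal.{u}) :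
    A ⊆ lvl A α := by
  rw [lvl]; exact Set.subset_union_left

lemma lvl_mono {Γ : Type u} [PartialOrder Γ] (A : Set Γ) {β α : Ordinal.{u}}
    (h : β ≤ α) : lvl A β ⊆ lvl A α := by
  intro x hx
  rw [lvl] at hx ⊢
  rcases hx with hx | ⟨f, hf, hfx, hfl⟩
  · exact Or.inl hx
  · refine Or.inr ⟨f, hf, hfx, fun n => ?_⟩
    obtain ⟨γ, hγ, hmem⟩ := hfl n
    exact ⟨γ, hγ.trans_le h, hmem⟩

/-- Build a monotone sequence by dependent choice. -/
lemma exists_mono_seq {Γ : Type u} [PartialOrder Γ] (Q : Γ → Prop) (F : ℕ → Γ → Prop)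
    (base : ∃ z, Q z ∧ F 0 z)
    (step : ∀ n z, Q z → ∃ z', Q z' ∧ z ≤ z' ∧ F (n + 1) z') :
    ∃ z : ℕ → Γ, Monotone z ∧ ∀ n, Q (z n) ∧ F n (z n) := by
  obtain ⟨z0, hz0Q, hz0F⟩ := base
  choose! nxt hQ hle hF using step
  let z : ℕ → Γ := fun n => Nat.rec z0 (fun k zk => nxt k zk) n
  have hzQ : ∀ n, Q (z n) := by
    intro n
    induction n with
    | zero => exact hz0Q
    | succ k ih => exact hQ k (z k) ih
  have hmono : Monotone z := by
    apply monotone_nat_of_le_succ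
    intro n
    exact hle n (z n) (hzQ n)
  refine ⟨z, hmono, fun n => ⟨hzQ n, ?_⟩⟩
  cases n with
  | zero => exact hz0F
  | succ k => exact hF k (z k) (hzQ k)

lemma lvl_directed {Γ : Type u} [PartialOrder Γ]
    (hσ : ∀ f : ℕ → Γ, Monotone f → ∃ s, IsLUB (Set.range f) s)
    (A : Set Γ) (hA : DirectedOn (· ≤ ·) A) :
    ∀ α : Ordinal.{u}, DirectedOn (· ≤ ·) (lvl A α) := by
  intro α
  induction α using Ordinal.induction with
  | h α IH =>
    -- pairwise bounds at levels below α, staying below α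
    have pair : ∀ (a b : Γ), (∃ β : Ordinal.{u}, ∃ _ : β < α, a ∈ lvl A β) →
        (∃ β : Ordinal.{u}, ∃ _ : β < α, b ∈ lvl A β) →
        ∃ c, (∃ β : Ordinal.{u}, ∃ _ : β < α, c ∈ lvl A β) ∧ a ≤ c ∧ b ≤ c := by
      rintro a b ⟨β, hβ, ha⟩ ⟨γ, hγ, hb⟩
      obtain ⟨c, hc, hac, hbc⟩ := IH (max β γ) (max_lt hβ hγ) a
        (lvl_mono A (le_max_left β γ) ha) b (lvl_mono A (le_max_right β γ) hb)
      exact ⟨c, ⟨max β γ, max_lt hβ hγ, hc⟩, hac, hbc⟩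
    have main : ∀ (x y : Γ) (f g : ℕ → Γ), Monotone f → Monotone g →
        IsLUB (Set.range f) x → IsLUB (Set.range g) y →
        (∀ n, ∃ β : Ordinal.{u}, ∃ _ : β < α, f n ∈ lvl A β) →
        (∀ n, ∃ β : Ordinal.{u}, ∃ _ : β < α, g n ∈ lvl A β) →
        ∃ z ∈ lvl A α, x ≤ z ∧ y ≤ z := by
      intro x y f g hf hg hfx hgy hfl hgl
      obtain ⟨z, hzmono, hz⟩ := exists_mono_seq
        (fun c => ∃ β : Ordinal.{u}, ∃ _ : β < α, c ∈ lvl A β)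
        (fun n c => f n ≤ c ∧ g n ≤ c)
        (by
          obtain ⟨c, hc, h1, h2⟩ := pair (f 0) (g 0) (hfl 0) (hgl 0)
          exact ⟨c, hc, h1, h2⟩)
        (by
          intro n c hc
          obtain ⟨c1, hc1, hcc1, hfc1⟩ := pair c (f (n + 1)) hc (hfl (n + 1))
          obtain ⟨c2, hc2, hc1c2, hgc2⟩ := pair c1 (g (n + 1)) hc1 (hgl (n + 1))
          exact ⟨c2, hc2, hcc1.trans hc1c2, hfc1.trans hc1c2, hgc2⟩)
      obtain ⟨s, hs⟩ := hσ z hzmono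
      refine ⟨s, ?_, ?_, ?_⟩
      · rw [lvl]
        exact Or.inr ⟨z, hzmono, hs, fun n => (hz n).1⟩
      · refine hfx.2 ?_
        rintro w ⟨n, rfl⟩
        exact (hz n).2.1.trans (hs.1 ⟨n, rfl⟩)
      · refine hgy.2 ?_
        rintro w ⟨n, rfl⟩
        exact (hz n).2.2.trans (hs.1 ⟨n, rfl⟩)
    intro x hx y hy
    rw [lvl] at hx hy
    rcases hx with hx | ⟨f, hf, hfx, hfl⟩ <;> rcases hy with hy | ⟨g, hg, hgy, hgl⟩
    · obtain ⟨c, hc, h1, h2⟩ := hA x hx y hy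
      exact ⟨c, subset_lvl A α hc, h1, h2⟩
    · obtain ⟨β, hβ, _⟩ := hgl 0
      exact main x y (fun _ => x) g monotone_const hg
        (by rw [Set.range_const]; exact isLUB_singleton) hgy
        (fun n => ⟨β, hβ, subset_lvl A β hx⟩) hgl
    · obtain ⟨β, hβ, _⟩ := hfl 0
      exact main x y f (fun _ => y) hf monotone_const hfx
        (by rw [Set.range_const]; exact isLUB_singleton)
        hfl (fun n => ⟨β, hβ, subset_lvl A β hy⟩)
    · exact main x y f g hf hg hfx hgy hfl hgl

theorem sigmaClosure_updirected
    {Γ : Type*} [PartialOrder Γ]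
    (hdir : ∀ s t : Γ, ∃ u, s ≤ u ∧ t ≤ u)
    (hσ : ∀ f : ℕ → Γ, Monotone f → ∃ s, IsLUB (Set.range f) s)
    (A : Set Γ) (hA : DirectedOn (· ≤ ·) A) :
    -- the σ-closure of A: the smallest subset of Γ containing A and closed
    -- under suprema of increasing sequences
    DirectedOn (· ≤ ·)
      (⋂₀ {B : Set Γ | A ⊆ B ∧
        ∀ f : ℕ → Γ, (∀ n, f n ∈ B) → Monotone f →
          ∀ s, IsLUB (Set.range f) s → s ∈ B}) := by
  have key : (⋂₀ {B : Set Γ | A ⊆ B ∧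
      ∀ f : ℕ → Γ, (∀ n, f n ∈ B) → Monotone f →
        ∀ s, IsLUB (Set.range f) s → s ∈ B}) = ⋃ α, lvl A α := by
    apply Set.Subset.antisymm
    · -- the union is one of the closed sets containing A
      intro x hx
      refine hx _ ⟨?_, ?_⟩
      · intro a ha
        exact Set.mem_iUnion.2 ⟨0, subset_lvl A 0 ha⟩
      · intro f hf hmono s hs
        choose β hβ using fun n => Set.mem_iUnion.1 (hf n)
        refine Set.mem_iUnion.2 ⟨Ordinal.lsub β, ?_⟩
        rw [lvl]
        exact Or.inr ⟨f, hmono, hs, fun n => ⟨β n, Ordinal.lt_lsub β n, hβ n⟩⟩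
    · -- every level is contained in every closed set containing A
      intro x hx
      obtain ⟨α, hα⟩ := Set.mem_iUnion.1 hx
      rintro B ⟨hAB, hBc⟩
      clear hx
      induction α using Ordinal.induction generalizing x with
      | h α IH =>
        rw [lvl] at hα
        rcases hα with hα | ⟨f, hf, hfx, hfl⟩
        · exact hAB hα
        · refine hBc f (fun n => ?_) hf x hfx
          obtain ⟨β, hβ, hmem⟩ := hfl n
          exact IH β hβ hmem
  rw [key]
  intro x hx y hy
  obtain ⟨α₁, hα₁⟩ := Set.mem_iUnion.1 hx
  obtain ⟨α₂, hα₂⟩ := Set.mem_iUnion.1 hy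
  obtain ⟨z, hz, h1, h2⟩ := lvl_directed hσ A hA (max α₁ α₂) x
    (lvl_mono A (le_max_left α₁ α₂) hα₁) y (lvl_mono A (le_max_right α₁ α₂) hα₂)
  exact ⟨z, Set.mem_iUnion.2 ⟨max α₁ α₂, hz⟩, h1, h2⟩
end

section
/- Let K be a compact Hausdorff space and (r_s)_{s∈Γ} a retractional skeleton on K. If Γ' ⊆ Γ is a countable up-directed subset, then s := sup Γ' exists in Γ and for every x ∈ K, the net (r_t(x))_{t∈Γ'} converges to r_s(x). -/
/-!
A countable up-directed set `Γ'` carries a countably generated `atTop` filter, so it has a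
monotone cofinal sequence, whose supremum (given by σ-completeness) is `sup Γ'`. Convergence of
the net `(r_t x)_{t ∈ Γ'}` can then be tested along sequences tending to infinity in `Γ'`, and
every such sequence has a monotone subsequence, which is again cofinal and hence has supremum
`sup Γ'`; condition (iii) applies to it.
-/

open Filter Set Topology

theorem Filter.Tendsto.exists_strictMono_monotone_comp {α : Type*} [Preorder α] {u : ℕ → α}
    (hu : Tendsto u atTop atTop) : ∃ φ : ℕ → ℕ, StrictMono φ ∧ Monotone (u ∘ φ) := by
  have hnext : ∀ n, ∃ k, n < k ∧ u n ≤ u k := fun n =>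
    ((eventually_gt_atTop n).and (hu.eventually_ge_atTop (u n))).exists
  choose next hlt hle using hnext
  refine ⟨fun k => next^[k] 0, strictMono_nat_of_lt_succ fun k => ?_,
    monotone_nat_of_le_succ fun k => ?_⟩
  · simpa only [Function.iterate_succ_apply'] using hlt _
  · simpa only [Function.comp_apply, Function.iterate_succ_apply'] using hle _

theorem upperBounds_range_eq_of_tendsto_atTop {α ι : Type*} [Preorder α] {S : Set α}
    {l : Filter ι} [l.NeBot] {v : ι → S} (hv : Tendsto v l atTop) :
    upperBounds (range fun i => (v i : α)) = upperBounds S := by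
  refine Subset.antisymm (fun b hb t ht => ?_) (upperBounds_mono_set ?_)
  · obtain ⟨i, hi⟩ := (hv.eventually_ge_atTop ⟨t, ht⟩).exists
    exact le_trans hi (hb ⟨i, rfl⟩)
  · rintro _ ⟨i, rfl⟩
    exact (v i).2

theorem DirectedOn.exists_isLUB_of_countable {α : Type*} [Preorder α]
    (hσ : ∀ f : ℕ → α, Monotone f → ∃ s, IsLUB (range f) s) {S : Set α}
    (hS : S.Countable) (hSdir : DirectedOn (· ≤ ·) S) (hSne : S.Nonempty) :
    ∃ s, IsLUB S s := by
  have : Countable S := hS.to_subtype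
  have : Nonempty S := hSne.to_subtype
  have : IsDirectedOrder S := hSdir.isDirectedOrder
  obtain ⟨v, hv_mono, hv⟩ := exists_seq_monotone_tendsto_atTop_atTop S
  obtain ⟨s, hs⟩ := hσ _ (Subtype.mono_coe _ |>.comp hv_mono)
  exact ⟨s, (isLUB_congr (upperBounds_range_eq_of_tendsto_atTop hv)).1 hs⟩

theorem Set.Countable.tendsto_atTop_of_isLUB {α X : Type*} [Preorder α] [TopologicalSpace X]
    {F : α → X}
    (hF : ∀ f : ℕ → α, Monotone f → ∀ s, IsLUB (range f) s →
      Tendsto (fun n => F (f n)) atTop (𝓝 (F s)))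
    {S : Set α} (hS : S.Countable) {s : α} (hs : IsLUB S s) :
    Tendsto (fun t : S => F t) atTop (𝓝 (F s)) := by
  have : Countable S := hS.to_subtype
  refine tendsto_iff_seq_tendsto.2 fun u hu => tendsto_of_subseq_tendsto fun ns hns => ?_
  obtain ⟨φ, hφ, hmono⟩ := (hu.comp hns).exists_strictMono_monotone_comp
  have hcofinal : Tendsto (u ∘ ns ∘ φ) atTop atTop := (hu.comp hns).comp hφ.tendsto_atTop
  refine ⟨φ, hF _ (Subtype.mono_coe _ |>.comp hmono) s ?_⟩
  exact (isLUB_congr (upperBounds_range_eq_of_tendsto_atTop hcofinal)).2 hs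

theorem countable_updirected_has_sup_and_limit_general
    {K : Type*} [TopologicalSpace K]
    {Γ : Type*} [PartialOrder Γ]
    (hσ : ∀ f : ℕ → Γ, Monotone f → ∃ s, IsLUB (Set.range f) s)
    (r : Γ → K → K)
    (hseq : ∀ f : ℕ → Γ, Monotone f → ∀ s, IsLUB (Set.range f) s →
      ∀ x : K, Tendsto (fun n => r (f n) x) atTop (nhds (r s x)))
    (Γ' : Set Γ) (hΓ'c : Γ'.Countable)
    (hΓ'dir : DirectedOn (· ≤ ·) Γ') (hΓ'ne : Γ'.Nonempty) :
    ∃ s : Γ, IsLUB Γ' s ∧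
      ∀ x : K, Tendsto (fun t : Γ' => r t x) atTop (nhds (r s x)) := by
  obtain ⟨s, hs⟩ := hΓ'dir.exists_isLUB_of_countable hσ hΓ'c hΓ'ne
  exact ⟨s, hs, fun x => hΓ'c.tendsto_atTop_of_isLUB (fun f hf t ht => hseq f hf t ht x) hs⟩

theorem countable_updirected_has_sup_and_limit
    {K : Type*} [TopologicalSpace K] [CompactSpace K] [T2Space K]
    {Γ : Type*} [PartialOrder Γ] [Nonempty Γ]
    (hdir : ∀ s t : Γ, ∃ u, s ≤ u ∧ t ≤ u)
    (hσ : ∀ f : ℕ → Γ, Monotone f → ∃ s, IsLUB (Set.range f) s)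
    (r : Γ → K → K)
    (hcont : ∀ s, Continuous (r s))
    (hretr : ∀ s, ∀ x, r s (r s x) = r s x)
    (hmetr : ∀ s : Γ, TopologicalSpace.MetrizableSpace (Set.range (r s)))
    (hcomm : ∀ s t : Γ, s ≤ t → ∀ x, r s (r t x) = r s x ∧ r t (r s x) = r s x)
    (hseq : ∀ f : ℕ → Γ, Monotone f → ∀ s, IsLUB (Set.range f) s →
      ∀ x : K, Tendsto (fun n => r (f n) x) atTop (nhds (r s x)))
    (hlim : ∀ x : K, Tendsto (fun s : Γ => r s x) atTop (nhds x))
    (Γ' : Set Γ) (hΓ'c : Γ'.Countable)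
    (hΓ'dir : DirectedOn (· ≤ ·) Γ') (hΓ'ne : Γ'.Nonempty) :
    ∃ s : Γ, IsLUB Γ' s ∧
      ∀ x : K, Tendsto (fun t : Γ' => r t x) atTop (nhds (r s x)) :=
  countable_updirected_has_sup_and_limit_general hσ r hseq Γ' hΓ'c hΓ'dir hΓ'ne
end

section
/- Let K be a compact Hausdorff space with a retractional skeleton (r_s)_{s∈Γ}, and let Γ' ⊆ Γ be up-directed. Then for every x ∈ K the net (r_s(x))_{s∈Γ'} converges; denoting the limit R_{Γ'}(x), the map R_{Γ'} : K → K is a continuous retraction and R_{Γ'}[K] equals the closure of ⋃_{s∈Γ'} r_s[K]. -/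
open Filter Set Topology

private lemma key_nbhd
    {K : Type*} [TopologicalSpace K]
    {Γ : Type*} (r : Γ → K → K)
    (hcont : ∀ s, Continuous (r s))
    (hmetr : ∀ s : Γ, TopologicalSpace.MetrizableSpace (Set.range (r s)))
    (t : Γ) (w : K) :
    ∃ W : ℕ → Set K, (∀ n, IsOpen (W n)) ∧ (∀ n, w ∈ W n) ∧
      ∀ (a : ℕ → K) (N : ℕ), (∀ k, N ≤ k → a k ∈ W k) →
        Tendsto (fun k => r t (a k)) atTop (nhds (r t w)) := by
  letI := hmetr t
  letI : MetricSpace (Set.range (r t)) := TopologicalSpace.metrizableSpaceMetric _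
  set e : K → Set.range (r t) := fun q => ⟨r t q, ⟨q, rfl⟩⟩ with he
  have hecont : Continuous e := (hcont t).subtype_mk _
  refine ⟨fun n => e ⁻¹' Metric.ball (e w) (1 / (n + 1)),
    fun n => Metric.isOpen_ball.preimage hecont, fun n => ?_, fun a N ha => ?_⟩
  · simp only [Set.mem_preimage, Metric.mem_ball, dist_self]
    positivity
  · have h1 : Tendsto (fun k => e (a k)) atTop (nhds (e w)) := by
      rw [tendsto_iff_dist_tendsto_zero]
      refine squeeze_zero' (Eventually.of_forall fun k => dist_nonneg) ?_
        tendsto_one_div_add_atTop_nhds_zero_nat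
      filter_upwards [eventually_ge_atTop N] with k hk
      exact le_of_lt (ha k hk)
    exact (continuous_subtype_val.tendsto (e w)).comp h1

private lemma star_lemma
    {K : Type*} [TopologicalSpace K] [CompactSpace K] [T2Space K]
    {Γ : Type*} [PartialOrder Γ]
    (hσ : ∀ f : ℕ → Γ, Monotone f → ∃ s, IsLUB (Set.range f) s)
    (r : Γ → K → K)
    (hcont : ∀ s, Continuous (r s))
    (hretr : ∀ s, ∀ x, r s (r s x) = r s x)
    (hmetr : ∀ s : Γ, TopologicalSpace.MetrizableSpace (Set.range (r s)))
    (hcomm : ∀ s t : Γ, s ≤ t → ∀ x, r s (r t x) = r s x ∧ r t (r s x) = r s x)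
    (hseq : ∀ f : ℕ → Γ, Monotone f → ∀ s, IsLUB (Set.range f) s →
      ∀ x : K, Tendsto (fun n => r (f n) x) atTop (nhds (r s x)))
    (Γ' : Set Γ) (hΓ'dir : DirectedOn (· ≤ ·) Γ') (hΓ'ne : Γ'.Nonempty)
    {y z : K}
    (hy : y ∈ closure (⋃ s ∈ Γ', Set.range (r s)))
    (hz : z ∈ closure (⋃ s ∈ Γ', Set.range (r s)))
    (hyz : ∀ t ∈ Γ', r t y = r t z) : y = z := by
  by_contra hne
  haveI : Nonempty ↥Γ' := hΓ'ne.to_subtype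
  haveI : IsDirected ↥Γ' (· ≤ ·) := by
    constructor
    rintro ⟨u, hu⟩ ⟨v, hv⟩
    obtain ⟨w, hw, h1, h2⟩ := hΓ'dir u hu v hv
    exact ⟨⟨w, hw⟩, h1, h2⟩
  -- separation with disjoint closures
  obtain ⟨U₀, V₀, hU₀, hV₀, hyU₀, hzV₀, hd⟩ := t2_separation hne
  obtain ⟨Cy, hCy, hCyc, hCysub⟩ := exists_mem_nhds_isClosed_subset (hU₀.mem_nhds hyU₀)
  obtain ⟨Cz, hCz, hCzc, hCzsub⟩ := exists_mem_nhds_isClosed_subset (hV₀.mem_nhds hzV₀)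
  set U : Set K := interior Cy with hU
  set V : Set K := interior Cz with hV
  have hUo : IsOpen U := isOpen_interior
  have hVo : IsOpen V := isOpen_interior
  have hyU : y ∈ U := mem_interior_iff_mem_nhds.mpr hCy
  have hzV : z ∈ V := mem_interior_iff_mem_nhds.mpr hCz
  have hUV : Disjoint (closure U) (closure V) := by
    refine hd.mono ?_ ?_
    · exact (closure_minimal interior_subset hCyc).trans hCysub
    · exact (closure_minimal interior_subset hCzc).trans hCzsub
  -- countable neighborhood systems
  choose Wy hWyo hWym hWyt using fun t => key_nbhd r hcont hmetr t y
  choose Wz hWzo hWzm hWzt using fun t => key_nbhd r hcont hmetr t z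
  set D : Set K := ⋃ s ∈ Γ', Set.range (r s) with hD
  classical
  -- one-step existence
  have ex : ∀ (k : ℕ) (ts : ℕ → ↥Γ'), ∃ p : ↥Γ' × K × K,
      (∀ j ≤ k, ts j ≤ p.1) ∧
      (p.2.1 ∈ U ∧ p.2.1 ∈ Set.range (r ↑p.1) ∧ ∀ j ≤ k, p.2.1 ∈ Wy ↑(ts j) k) ∧
      (p.2.2 ∈ V ∧ p.2.2 ∈ Set.range (r ↑p.1) ∧ ∀ j ≤ k, p.2.2 ∈ Wz ↑(ts j) k) := by
    intro k ts
    have hOyo : IsOpen (U ∩ ⋂ j ∈ Finset.range (k+1), Wy ↑(ts j) k) :=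
      hUo.inter (isOpen_biInter_finset fun j _ => hWyo _ _)
    have hyOy : y ∈ U ∩ ⋂ j ∈ Finset.range (k+1), Wy ↑(ts j) k :=
      ⟨hyU, Set.mem_iInter₂.mpr fun j _ => hWym _ _⟩
    obtain ⟨a, haO, haD⟩ := (mem_closure_iff.mp hy) _ hOyo hyOy
    have hOzo : IsOpen (V ∩ ⋂ j ∈ Finset.range (k+1), Wz ↑(ts j) k) :=
      hVo.inter (isOpen_biInter_finset fun j _ => hWzo _ _)
    have hzOz : z ∈ V ∩ ⋂ j ∈ Finset.range (k+1), Wz ↑(ts j) k :=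
      ⟨hzV, Set.mem_iInter₂.mpr fun j _ => hWzm _ _⟩
    obtain ⟨b, hbO, hbD⟩ := (mem_closure_iff.mp hz) _ hOzo hzOz
    rw [hD, Set.mem_iUnion₂] at haD hbD
    obtain ⟨τa, hτa, haR⟩ := haD
    obtain ⟨τb, hτb, hbR⟩ := hbD
    obtain ⟨M, hM⟩ := Finset.exists_le
      (insert (⟨τa, hτa⟩ : ↥Γ') (insert (⟨τb, hτb⟩ : ↥Γ')
        ((Finset.range (k+1)).image fun j => ts j)))
    have hτaM : τa ≤ (M : Γ) :=
      Subtype.coe_le_coe.mpr (hM ⟨τa, hτa⟩ (Finset.mem_insert_self _ _))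
    have hτbM : τb ≤ (M : Γ) :=
      Subtype.coe_le_coe.mpr (hM ⟨τb, hτb⟩ (Finset.mem_insert_of_mem (Finset.mem_insert_self _ _)))
    have htsM : ∀ j ≤ k, ts j ≤ M := by
      intro j hj
      exact hM _ (Finset.mem_insert_of_mem (Finset.mem_insert_of_mem
        (Finset.mem_image.mpr ⟨j, Finset.mem_range.mpr (Nat.lt_succ_of_le hj), rfl⟩)))
    have haRM : a ∈ Set.range (r ↑M) := by
      obtain ⟨q, hq⟩ := haR
      exact ⟨a, by rw [← hq]; exact (hcomm τa ↑M hτaM q).2⟩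
    have hbRM : b ∈ Set.range (r ↑M) := by
      obtain ⟨q, hq⟩ := hbR
      exact ⟨b, by rw [← hq]; exact (hcomm τb ↑M hτbM q).2⟩
    exact ⟨⟨M, a, b⟩, htsM,
      ⟨haO.1, haRM, fun j hj => Set.mem_iInter₂.mp haO.2 j (Finset.mem_range.mpr (Nat.lt_succ_of_le hj))⟩,
      ⟨hbO.1, hbRM, fun j hj => Set.mem_iInter₂.mp hbO.2 j (Finset.mem_range.mpr (Nat.lt_succ_of_le hj))⟩⟩
  -- recursive construction
  set t0 : ↥Γ' := ⟨hΓ'ne.choose, hΓ'ne.choose_spec⟩ with ht0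
  set h : ℕ → ℕ → ↥Γ' × K × K := fun n => Nat.rec (motive := fun _ => ℕ → ↥Γ' × K × K)
    (fun _ => (t0, y, z))
    (fun k ih => Function.update ih (k+1) (Classical.choose (ex k (fun j => (ih j).1)))) n
    with hh
  set g : ℕ → ↥Γ' × K × K := fun n => h n n with hg
  have hstep : ∀ k, h (k+1) = Function.update (h k) (k+1)
      (Classical.choose (ex k (fun j => (h k j).1))) := fun k => rfl
  have stable : ∀ k j, j ≤ k → h k j = g j := by
    intro k
    induction k with
    | zero =>
      intro j hj
      have : j = 0 := Nat.le_zero.mp hj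
      subst this; rfl
    | succ k ih =>
      intro j hj
      rcases eq_or_lt_of_le hj with hjk | hjk
      · subst hjk; rfl
      · have hj' : j ≤ k := Nat.lt_succ_iff.mp hjk
        have : h (k+1) j = h k j := by
          rw [hstep k]
          exact Function.update_of_ne (by omega) _ _
        rw [this, ih j hj']
  -- specification of g
  have gsucc : ∀ k, g (k+1) = Classical.choose (ex k (fun j => (h k j).1)) := by
    intro k
    show h (k+1) (k+1) = _
    rw [hstep k]
    exact Function.update_self _ _ _
  set T : ℕ → ↥Γ' := fun n => (g n).1 with hT
  set A : ℕ → K := fun k => (g (k+1)).2.1 with hA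
  set B : ℕ → K := fun k => (g (k+1)).2.2 with hB
  have spec : ∀ k, (∀ j ≤ k, T j ≤ T (k+1)) ∧
      (A k ∈ U ∧ A k ∈ Set.range (r ↑(T (k+1))) ∧ ∀ j ≤ k, A k ∈ Wy ↑(T j) k) ∧
      (B k ∈ V ∧ B k ∈ Set.range (r ↑(T (k+1))) ∧ ∀ j ≤ k, B k ∈ Wz ↑(T j) k) := by
    intro k
    have hch := Classical.choose_spec (ex k (fun j => (h k j).1))
    rw [← gsucc k] at hch
    have hts : ∀ j ≤ k, (h k j).1 = T j := by
      intro j hj; rw [stable k j hj]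
    obtain ⟨h1, ⟨h2a, h2b, h2c⟩, ⟨h3a, h3b, h3c⟩⟩ := hch
    exact ⟨fun j hj => (hts j hj) ▸ h1 j hj,
      ⟨h2a, h2b, fun j hj => (hts j hj) ▸ h2c j hj⟩,
      ⟨h3a, h3b, fun j hj => (hts j hj) ▸ h3c j hj⟩⟩
  have Tmono : Monotone T := monotone_nat_of_le_succ fun n => (spec n).1 n le_rfl
  have Tmono' : Monotone (fun n => (↑(T n) : Γ)) := fun a b hab => Tmono hab
  obtain ⟨s, hs⟩ := hσ _ Tmono'
  have hTs : ∀ n, (↑(T n) : Γ) ≤ s := fun n => hs.1 ⟨n, rfl⟩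
  have limT : ∀ w : K, Tendsto (fun n => r ↑(T n) w) atTop (nhds (r s w)) :=
    fun w => hseq _ Tmono' s hs w
  have rangeS : ∀ t : Γ, t ≤ s → Set.range (r t) ⊆ Set.range (r s) := by
    rintro t ht x ⟨q, hq⟩
    exact ⟨x, by rw [← hq]; exact (hcomm t s ht q).2⟩
  -- the cluster point argument
  have main : ∀ (C : ℕ → K) (O : Set K) (w : K),
      (∀ k, C k ∈ O) → (∀ k, C k ∈ Set.range (r ↑(T (k+1)))) →
      (∀ j, Tendsto (fun k => r ↑(T j) (C k)) atTop (nhds (r ↑(T j) w))) →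
      r s w ∈ closure O := by
    intro C O w hO hrange hconv
    haveI : (Filter.map C atTop).NeBot := Filter.map_neBot
    obtain ⟨c, -, hc⟩ := isCompact_univ (f := Filter.map C atTop)
      (le_principal_iff.mpr univ_mem)
    have hcO : c ∈ closure O := mem_closure_iff_clusterPt.mpr
      (hc.mono (le_principal_iff.mpr (mem_map.mpr (Eventually.of_forall hO))))
    have hcrange : c ∈ Set.range (r s) := by
      have hsub : Set.range C ⊆ Set.range (r s) :=
        Set.range_subset_iff.mpr fun k => rangeS _ (hTs (k+1)) (hrange k)
      have hmem : c ∈ closure (Set.range C) := mem_closure_iff_clusterPt.mpr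
        (hc.mono (le_principal_iff.mpr (mem_map.mpr
          (Eventually.of_forall fun k => Set.mem_range_self k))))
      exact (isCompact_range (hcont s)).isClosed.closure_subset
        ((closure_mono hsub) hmem)
    have hTc : ∀ j, r ↑(T j) c = r ↑(T j) w := by
      intro j
      have hmap : ClusterPt (r ↑(T j) c)
          (Filter.map (fun k => r ↑(T j) (C k)) atTop) := by
        have := hc.map (f := r ↑(T j)) ((hcont _).continuousAt) Filter.tendsto_map
        rwa [Filter.map_map] at this
      exact eq_of_nhds_neBot (hmap.mono (hconv j))
    have h1 : r s c = r s w := by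
      have hcw : (fun n => r ↑(T n) c) = fun n => r ↑(T n) w := funext hTc
      have := limT c
      rw [hcw] at this
      exact tendsto_nhds_unique this (limT w)
    obtain ⟨q, hq⟩ := hcrange
    have h2 : r s c = c := by rw [← hq, hretr]
    rw [← h1, h2]
    exact hcO
  have hAcl : r s y ∈ closure U := by
    refine main A U y (fun k => (spec k).2.1.1) (fun k => (spec k).2.1.2.1) ?_
    intro j
    exact hWyt ↑(T j) A j (fun k hk => (spec k).2.1.2.2 j hk)
  have hBcl : r s z ∈ closure V := by
    refine main B V z (fun k => (spec k).2.2.1) (fun k => (spec k).2.2.2.1) ?_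
    intro j
    exact hWzt ↑(T j) B j (fun k hk => (spec k).2.2.2.2 j hk)
  have hEq : r s y = r s z := by
    have hfe : (fun n => r ↑(T n) y) = fun n => r ↑(T n) z :=
      funext fun n => hyz ↑(T n) (T n).2
    have := limT y
    rw [hfe] at this
    exact tendsto_nhds_unique this (limT z)
  exact Set.disjoint_left.mp hUV hAcl (hEq ▸ hBcl)

private lemma aux_le_nhds_of_unique_clusterPt
    {K : Type*} [TopologicalSpace K] [CompactSpace K]
    {F : Filter K} [F.NeBot] {w : K}
    (h : ∀ c, ClusterPt c F → c = w) : F ≤ nhds w := by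
  intro UU hUU
  obtain ⟨O, hOU, hOo, hwO⟩ := mem_nhds_iff.mp hUU
  by_contra hUF
  have hO' : O ∉ F := fun hmem => hUF (Filter.mem_of_superset hmem hOU)
  have hne : (F ⊓ Filter.principal Oᶜ).NeBot := by
    rw [Filter.inf_principal_neBot_iff]
    intro Uf hUf
    by_contra hempty
    rw [Set.not_nonempty_iff_eq_empty] at hempty
    have hsub : Uf ⊆ O := by
      intro q hq
      by_contra hqO
      exact (Set.eq_empty_iff_forall_notMem.mp hempty q) ⟨hq, hqO⟩
    exact hO' (Filter.mem_of_superset hUf hsub)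
  obtain ⟨c, -, hc⟩ := isCompact_univ (f := F ⊓ Filter.principal Oᶜ)
    (le_principal_iff.mpr univ_mem)
  have hcF : ClusterPt c F := hc.mono inf_le_left
  have hcO : c ∈ Oᶜ := by
    have : c ∈ closure Oᶜ := mem_closure_iff_clusterPt.mpr (hc.mono inf_le_right)
    rwa [hOo.isClosed_compl.closure_eq] at this
  exact hcO ((h c hcF).symm ▸ hwO)

theorem updirected_limit_retraction
    {K : Type*} [TopologicalSpace K] [CompactSpace K] [T2Space K]
    {Γ : Type*} [PartialOrder Γ] [Nonempty Γ]
    (hdir : ∀ s t : Γ, ∃ u, s ≤ u ∧ t ≤ u)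
    (hσ : ∀ f : ℕ → Γ, Monotone f → ∃ s, IsLUB (Set.range f) s)
    (r : Γ → K → K)
    (hcont : ∀ s, Continuous (r s))
    (hretr : ∀ s, ∀ x, r s (r s x) = r s x)
    (hmetr : ∀ s : Γ, TopologicalSpace.MetrizableSpace (Set.range (r s)))
    (hcomm : ∀ s t : Γ, s ≤ t → ∀ x, r s (r t x) = r s x ∧ r t (r s x) = r s x)
    (hseq : ∀ f : ℕ → Γ, Monotone f → ∀ s, IsLUB (Set.range f) s →
      ∀ x : K, Tendsto (fun n => r (f n) x) atTop (nhds (r s x)))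
    (hlim : ∀ x : K, Tendsto (fun s : Γ => r s x) atTop (nhds x))
    (Γ' : Set Γ) (hΓ'dir : DirectedOn (· ≤ ·) Γ') (hΓ'ne : Γ'.Nonempty) :
    ∃ R : K → K,
      (∀ x : K, Tendsto (fun s : Γ' => r s x) atTop (nhds (R x))) ∧
      Continuous R ∧
      (∀ x : K, R (R x) = R x) ∧
      Set.range R = closure (⋃ s ∈ Γ', Set.range (r s)) := by
  classical
  haveI : Nonempty ↥Γ' := hΓ'ne.to_subtype
  haveI : IsDirected ↥Γ' (· ≤ ·) := by
    constructor
    rintro ⟨u, hu⟩ ⟨v, hv⟩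
    obtain ⟨w, hw, h1, h2⟩ := hΓ'dir u hu v hv
    exact ⟨⟨w, hw⟩, h1, h2⟩
  haveI : (atTop : Filter ↥Γ').NeBot := atTop_neBot_iff.mpr ⟨‹_›, ‹_›⟩
  set D : Set K := ⋃ s ∈ Γ', Set.range (r s) with hD
  have star : ∀ {y z : K}, y ∈ closure D → z ∈ closure D →
      (∀ t ∈ Γ', r t y = r t z) → y = z :=
    fun hy hz hyz => star_lemma hσ r hcont hretr hmetr hcomm hseq Γ' hΓ'dir hΓ'ne hy hz hyz
  have hclus : ∀ (x c : K), ClusterPt c (Filter.map (fun s : ↥Γ' => r ↑s x) atTop) →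
      c ∈ closure D ∧ ∀ t : ↥Γ', r ↑t c = r ↑t x := by
    intro x c hc
    constructor
    · refine mem_closure_iff_clusterPt.mpr (hc.mono (le_principal_iff.mpr
        (mem_map.mpr (Eventually.of_forall fun s => ?_))))
      exact Set.mem_biUnion s.2 (Set.mem_range_self x)
    · intro t
      have hmap : ClusterPt (r ↑t c)
          (Filter.map (fun sn : ↥Γ' => r ↑t (r ↑sn x)) atTop) := by
        have := hc.map (f := r ↑t) ((hcont _).continuousAt) Filter.tendsto_map
        rwa [Filter.map_map] at this
      have hlimc : Tendsto (fun sn : ↥Γ' => r ↑t (r ↑sn x)) atTop (nhds (r ↑t x)) := by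
        refine tendsto_const_nhds.congr' ?_
        filter_upwards [eventually_ge_atTop t] with sn hsn
        exact ((hcomm ↑t ↑sn hsn x).1).symm
      exact eq_of_nhds_neBot (hmap.mono hlimc)
  have conv : ∀ x : K, ∃ yy : K, Tendsto (fun s : ↥Γ' => r ↑s x) atTop (nhds yy) := by
    intro x
    haveI : (Filter.map (fun s : ↥Γ' => r ↑s x) atTop).NeBot := Filter.map_neBot
    obtain ⟨c, -, hc⟩ := isCompact_univ (f := Filter.map (fun s : ↥Γ' => r ↑s x) atTop)
      (le_principal_iff.mpr univ_mem)
    refine ⟨c, aux_le_nhds_of_unique_clusterPt ?_⟩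
    intro c' hc'
    obtain ⟨h1, h2⟩ := hclus x c' hc'
    obtain ⟨h3, h4⟩ := hclus x c hc
    exact star h1 h3 (fun t ht => by rw [h2 ⟨t, ht⟩, h4 ⟨t, ht⟩])
  choose R hten using conv
  have hRclD : ∀ x, R x ∈ closure D := fun x =>
    mem_closure_of_tendsto (hten x)
      (Eventually.of_forall fun s => Set.mem_biUnion s.2 (Set.mem_range_self x))
  have hRt : ∀ (x : K) (t : ↥Γ'), r ↑t (R x) = r ↑t x := by
    intro x t
    have h1 : Tendsto (fun s : ↥Γ' => r ↑t (r ↑s x)) atTop (nhds (r ↑t (R x))) :=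
      ((hcont ↑t).tendsto _).comp (hten x)
    have h2 : Tendsto (fun s : ↥Γ' => r ↑t (r ↑s x)) atTop (nhds (r ↑t x)) := by
      refine tendsto_const_nhds.congr' ?_
      filter_upwards [eventually_ge_atTop t] with sn hsn
      exact ((hcomm ↑t ↑sn hsn x).1).symm
    exact tendsto_nhds_unique h1 h2
  have hfix : ∀ w ∈ closure D, R w = w := fun w hw =>
    star (hRclD w) hw (fun t ht => hRt w ⟨t, ht⟩)
  have hcontR : Continuous R := by
    rw [continuous_iff_isClosed]
    intro C hC
    set G : Set (K × K) := (Prod.snd ⁻¹' closure D) ∩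
      ⋂ t : ↥Γ', {p : K × K | r ↑t p.2 = r ↑t p.1} with hGdef
    have hG : IsClosed G :=
      (isClosed_closure.preimage continuous_snd).inter
        (isClosed_iInter fun t => isClosed_eq
          ((hcont ↑t).comp continuous_snd) ((hcont ↑t).comp continuous_fst))
    have himg : R ⁻¹' C = Prod.fst '' (G ∩ (Set.univ ×ˢ C)) := by
      ext x
      constructor
      · intro hx
        refine ⟨(x, R x), ⟨⟨hRclD x, Set.mem_iInter.mpr fun t => hRt x t⟩,
          ⟨Set.mem_univ _, hx⟩⟩, rfl⟩
      · rintro ⟨⟨x1, w⟩, ⟨⟨hwD, hwr⟩, ⟨-, hwC⟩⟩, rfl⟩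
        have hwr' : ∀ t ∈ Γ', r t w = r t (R x1) := by
          intro t ht
          have := Set.mem_iInter.mp hwr ⟨t, ht⟩
          rw [this, hRt x1 ⟨t, ht⟩]
        have : w = R x1 := star hwD (hRclD x1) hwr'
        show R x1 ∈ C
        rwa [← this]
    rw [himg]
    exact ((hG.inter (isClosed_univ.prod hC)).isCompact.image continuous_fst).isClosed
  refine ⟨R, hten, hcontR, fun x => hfix (R x) (hRclD x), ?_⟩
  ext w
  constructor
  · rintro ⟨x, rfl⟩
    exact hRclD x
  · intro hw
    exact ⟨w, hfix w hw⟩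
end

section
/- Let K be a compact Hausdorff space with a retractional skeleton (r_s)_{s∈Γ}, let M ⊆ 𝒫(Γ) be an up-directed (under inclusion) family whose members are up-directed subsets of Γ, and let M_∞ := ⋃ M. Then for every x ∈ K, the net (R_M(x))_{M∈M} converges to R_{M_∞}(x), where R_{Γ'}(x) := lim_{s∈Γ'} r_s(x) for up-directed Γ' ⊆ Γ. -/
open Filter

theorem updirected_family_of_updirected_sets_limit
    {K : Type*} [TopologicalSpace K] [CompactSpace K] [T2Space K]
    {Γ : Type*} [PartialOrder Γ] [Nonempty Γ]
    (hdir : ∀ s t : Γ, ∃ u, s ≤ u ∧ t ≤ u)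
    (hσ : ∀ f : ℕ → Γ, Monotone f → ∃ s, IsLUB (Set.range f) s)
    (r : Γ → K → K)
    (hcont : ∀ s, Continuous (r s))
    (hretr : ∀ s, ∀ x, r s (r s x) = r s x)
    (hmetr : ∀ s : Γ, TopologicalSpace.MetrizableSpace (Set.range (r s)))
    (hcomm : ∀ s t : Γ, s ≤ t → ∀ x, r s (r t x) = r s x ∧ r t (r s x) = r s x)
    (hseq : ∀ f : ℕ → Γ, Monotone f → ∀ s, IsLUB (Set.range f) s →
      ∀ x : K, Tendsto (fun n => r (f n) x) atTop (nhds (r s x)))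
    (hlim : ∀ x : K, Tendsto (fun s : Γ => r s x) atTop (nhds x))
    (R : Set Γ → K → K)
    (hR : ∀ Γ' : Set Γ, DirectedOn (· ≤ ·) Γ' → Γ'.Nonempty → ∀ x : K,
      Tendsto (fun s : Γ' => r s x) atTop (nhds (R Γ' x)))
    (M : Set (Set Γ)) (hMne : M.Nonempty)
    (hMdir : DirectedOn (· ⊆ ·) M)
    (hmem : ∀ m ∈ M, DirectedOn (· ≤ ·) m ∧ m.Nonempty) :
    ∀ x : K, Tendsto (fun m : M => R m x) atTop (nhds (R (⋃₀ M) x)) := by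
  intro x
  -- The union is up-directed and nonempty
  have hUdir : DirectedOn (· ≤ ·) (⋃₀ M) := by
    rintro s ⟨m1, hm1, hs⟩ t ⟨m2, hm2, ht⟩
    obtain ⟨m, hm, h1, h2⟩ := hMdir m1 hm1 m2 hm2
    obtain ⟨u, hu, hsu, htu⟩ := (hmem m hm).1 s (h1 hs) t (h2 ht)
    exact ⟨u, ⟨m, hm, hu⟩, hsu, htu⟩
  have hUne : (⋃₀ M).Nonempty := by
    obtain ⟨m, hm⟩ := hMne
    obtain ⟨s, hs⟩ := (hmem m hm).2
    exact ⟨s, m, hm, hs⟩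
  have hL := hR (⋃₀ M) hUdir hUne x
  set L := R (⋃₀ M) x with hLdef
  haveI : Nonempty (⋃₀ M : Set Γ) := hUne.to_subtype
  haveI : IsDirected (⋃₀ M : Set Γ) (· ≤ ·) := by
    constructor
    rintro ⟨a, ha⟩ ⟨b, hb⟩
    obtain ⟨u, hu, h1, h2⟩ := hUdir a ha b hb
    exact ⟨⟨u, hu⟩, h1, h2⟩
  haveI : Nonempty M := hMne.to_subtype
  haveI : IsDirected M (· ≤ ·) := by
    constructor
    rintro ⟨a, ha⟩ ⟨b, hb⟩
    obtain ⟨u, hu, h1, h2⟩ := hMdir a ha b hb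
    exact ⟨⟨u, hu⟩, h1, h2⟩
  rw [(closed_nhds_basis L).tendsto_right_iff]
  rintro V ⟨hVnh, hVcl⟩
  have hLint : L ∈ interior V := mem_interior_iff_mem_nhds.2 hVnh
  have hev : ∀ᶠ s : (⋃₀ M : Set Γ) in atTop, r s x ∈ interior V :=
    hL (isOpen_interior.mem_nhds hLint)
  obtain ⟨s0, hs0⟩ := eventually_atTop.1 hev
  obtain ⟨m0, hm0M, hs0m0⟩ := s0.2
  rw [eventually_atTop]
  refine ⟨⟨m0, hm0M⟩, ?_⟩
  rintro ⟨m, hmM⟩ hm0m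
  obtain ⟨hmdir, hmne⟩ := hmem m hmM
  have hTend := hR m hmdir hmne x
  haveI : Nonempty m := hmne.to_subtype
  haveI : IsDirected m (· ≤ ·) := by
    constructor
    rintro ⟨a, ha⟩ ⟨b, hb⟩
    obtain ⟨u, hu, h1, h2⟩ := hmdir a ha b hb
    exact ⟨⟨u, hu⟩, h1, h2⟩
  have hs0m : (s0 : Γ) ∈ m := hm0m hs0m0
  have hevm : ∀ᶠ s : m in atTop, r s x ∈ interior V := by
    rw [eventually_atTop]
    refine ⟨⟨s0, hs0m⟩, ?_⟩
    rintro ⟨s, hsm⟩ hle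
    exact hs0 ⟨s, m, hmM, hsm⟩ hle
  have hcl : R m x ∈ closure (interior V) := mem_closure_of_tendsto hTend hevm
  exact (closure_minimal interior_subset hVcl) hcl
end
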